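/- arXiv:2507.06322 — 2 statements merged into one kernel-verified Lean document; each statement's English description precedes it below -/
import Mathlib

section
/- Let G be a k-uniform hypergraph with n vertices and m edges, and let E(G) = ∑_{i=1}^{n} |λ_i| be its energy. Then the Estrada index satisfies EE(G) ≤ n + E(G) − 1 − √((k−1)m(m(k−2)+2)) + e^{√((k−1)m(m(k−2)+2))}, and equality holds if and only if G has no edges (G is the edgeless hypergraph on n vertices). -/
/-!
The eigenvalues `λᵢ` of `A(G)` satisfy `∑ λᵢ = tr A = 0` and
`∑ λᵢ² = tr A² = ∑_{e,f ∈ E} |e ∩ f| (|e ∩ f| - 1) ≤ T := (k-1) m (m (k-2) + 2)`, because distinct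
edges of a `k`-uniform hypergraph share at most `k - 1` vertices. Hence `|λᵢ| ≤ √T`, and as
`(eˣ - 1 - x) / x²` increases on `[0, ∞)`,
`∑ (e^|λᵢ| - 1 - |λᵢ|) ≤ (e^√T - 1 - √T) ∑ λᵢ² / T ≤ e^√T - 1 - √T`. So
`EE(G) ≤ ∑ e^|λᵢ| ≤ n + E(G) + e^√T - 1 - √T`. If `G` has an edge then `A ≠ 0`, and a nonzero
spectrum summing to `0` contains a negative eigenvalue, which makes the first step strict.
-/

open scoped BigOperators

set_option linter.unusedSectionVars false

section Hyper

variable {V : Type*} [Fintype V] [DecidableEq V]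

/-- The adjacency matrix of a hypergraph given by its edge set `E`:
the `(i,j)` entry, for `i ≠ j`, is the number of edges containing both `i` and `j`,
and the diagonal entries are `0`. -/
def adjMatrix (E : Finset (Finset V)) : Matrix V V ℝ :=
  fun i j => if i = j then 0 else ((E.filter fun e => i ∈ e ∧ j ∈ e).card : ℝ)

theorem adjMatrix_isHermitian (E : Finset (Finset V)) :
    (adjMatrix E).IsHermitian := by
  unfold Matrix.IsHermitian
  ext i j
  simp only [Matrix.conjTranspose_apply, adjMatrix, star_trivial]
  rcases eq_or_ne i j with h | h
  · simp [h]
  · have hfilter : E.filter (fun e => j ∈ e ∧ i ∈ e) = E.filter (fun e => i ∈ e ∧ j ∈ e) :=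
      Finset.filter_congr fun e _ => and_comm
    rw [if_neg (Ne.symm h), if_neg h, hfilter]

/-- The Estrada index of a hypergraph: `EE(G) = ∑ᵢ exp (λᵢ)`, the sum over the
eigenvalues (with multiplicity) of the adjacency matrix; equivalently `tr (exp A(G))`. -/
noncomputable def estradaIndex (E : Finset (Finset V)) : ℝ :=
  ∑ i, Real.exp ((adjMatrix_isHermitian E).eigenvalues i)

/-- The energy of a hypergraph: `∑ᵢ |λᵢ|` over the adjacency eigenvalues. -/
noncomputable def energy (E : Finset (Finset V)) : ℝ :=
  ∑ i, |(adjMatrix_isHermitian E).eigenvalues i|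

/-- The degree of a vertex: the number of edges containing it. -/
def degree (E : Finset (Finset V)) (v : V) : ℕ := (E.filter fun e => v ∈ e).card

end Hyper

open Finset Real

theorem exp_sub_one_sub_mul_sq_le {x s : ℝ} (hx : 0 ≤ x) (hxs : x ≤ s) :
    (exp x - 1 - x) * s ^ 2 ≤ (exp s - 1 - s) * x ^ 2 := by
  have hsummable (t : ℝ) : Summable fun n : ℕ => t ^ (n + 2) / (n + 2).factorial :=
    (summable_nat_add_iff 2).2 (summable_pow_div_factorial t)
  have htsum (t : ℝ) : exp t - 1 - t = ∑' n : ℕ, t ^ (n + 2) / (n + 2).factorial := by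
    have h := (summable_pow_div_factorial t).sum_add_tsum_nat_add 2
    rw [exp_eq_exp_ℝ, NormedSpace.exp_eq_tsum_div]
    simp only [sum_range_succ, range_one, sum_singleton, pow_zero, Nat.factorial_zero,
      Nat.cast_one, ne_eq, one_ne_zero, not_false_eq_true, div_self, pow_one, Nat.factorial_one,
      div_one] at h
    linarith
  rw [htsum, htsum, ← tsum_mul_right, ← tsum_mul_right]
  refine (hsummable x).mul_right _ |>.tsum_le_tsum (fun n => ?_) ((hsummable s).mul_right _)
  rw [div_mul_eq_mul_div, div_mul_eq_mul_div]
  gcongr ?_ / _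
  calc x ^ (n + 2) * s ^ 2 = x ^ n * (x ^ 2 * s ^ 2) := by ring
    _ ≤ s ^ n * (x ^ 2 * s ^ 2) := by gcongr
    _ = s ^ (n + 2) * x ^ 2 := by ring

section RealVector

variable {ι : Type*} [Fintype ι]

theorem sum_exp_abs_sub_one_sub_le {x : ι → ℝ} {S : ℝ} (hS : 0 < S)
    (hx : ∑ i, x i ^ 2 ≤ S ^ 2) :
    ∑ i, (exp |x i| - 1 - |x i|) ≤ exp S - 1 - S := by
  have hterm (i : ι) : (exp |x i| - 1 - |x i|) * S ^ 2 ≤ (exp S - 1 - S) * x i ^ 2 := by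
    have hxi : |x i| ≤ S :=
      abs_le_of_sq_le_sq ((single_le_sum (fun j _ => sq_nonneg (x j)) (mem_univ i)).trans hx) hS.le
    simpa only [sq_abs] using exp_sub_one_sub_mul_sq_le (abs_nonneg (x i)) hxi
  have hS' : 0 ≤ exp S - 1 - S := by linarith [add_one_le_exp S]
  refine le_of_mul_le_mul_right ?_ (pow_pos hS 2)
  calc (∑ i, (exp |x i| - 1 - |x i|)) * S ^ 2
      ≤ (exp S - 1 - S) * ∑ i, x i ^ 2 := by
        rw [sum_mul, mul_sum]
        exact sum_le_sum fun i _ => hterm i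
    _ ≤ (exp S - 1 - S) * S ^ 2 := by gcongr

theorem sum_exp_lt_of_sum_sq_le {x : ι → ℝ} {T : ℝ} (hx : ∑ i, x i ^ 2 ≤ T)
    (hneg : ∃ j, x j < 0) :
    ∑ i, exp (x i) < Fintype.card ι + ∑ i, |x i| - 1 - √T + exp √T := by
  obtain ⟨j, hj⟩ := hneg
  have hT : x j ^ 2 ≤ T := (single_le_sum (fun i _ => sq_nonneg (x i)) (mem_univ j)).trans hx
  have hS : 0 < √T := sqrt_pos.2 ((sq_pos_of_neg hj).trans_le hT)
  have hsum := sum_exp_abs_sub_one_sub_le hS (by rwa [sq_sqrt ((sq_nonneg _).trans hT)])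
  calc ∑ i, exp (x i) < ∑ i, exp |x i| :=
        sum_lt_sum (fun i _ => exp_le_exp.2 (le_abs_self _))
          ⟨j, mem_univ j, exp_lt_exp.2 (hj.trans_le (abs_nonneg _))⟩
    _ = Fintype.card ι + ∑ i, |x i| + ∑ i, (exp |x i| - 1 - |x i|) := by
        simp only [sum_sub_distrib, sum_const, card_univ, nsmul_eq_mul, mul_one]
        ring
    _ ≤ Fintype.card ι + ∑ i, |x i| - 1 - √T + exp √T := by linarith

end RealVector

theorem Matrix.IsHermitian.trace_mul_self {𝕜 n : Type*} [RCLike 𝕜] [Fintype n] [DecidableEq n]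
    {A : Matrix n n 𝕜} (hA : A.IsHermitian) :
    (A * A).trace = ∑ i, (hA.eigenvalues i : 𝕜) ^ 2 := by
  conv_lhs => rw [hA.spectral_theorem, ← map_mul, Unitary.conjStarAlgAut_apply,
    Matrix.trace_mul_cycle, Unitary.coe_star_mul_self, one_mul, Matrix.diagonal_mul_diagonal,
    Matrix.trace_diagonal]
  simp [sq]

section Hypergraph

variable {V : Type*} [Fintype V] [DecidableEq V] (E : Finset (Finset V))

theorem adjMatrix_apply_eq_sum (i j : V) :
    adjMatrix E i j = ∑ e ∈ E, if (i, j) ∈ e.offDiag then 1 else 0 := by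
  rw [sum_boole, adjMatrix]
  split_ifs with h
  · simp [h]
  · simp [mem_offDiag, h]

theorem adjMatrix_empty : adjMatrix (∅ : Finset (Finset V)) = 0 := by
  ext i j
  simp [adjMatrix_apply_eq_sum]

theorem adjMatrix_ne_zero {E : Finset (Finset V)} {e : Finset V} (he : e ∈ E) (h : 1 < #e) :
    adjMatrix E ≠ 0 := by
  obtain ⟨i, hi, j, hj, hij⟩ := one_lt_card.1 h
  intro h0
  have hij0 := congrFun₂ h0 i j
  simp only [adjMatrix, hij, if_false, Matrix.zero_apply, Nat.cast_eq_zero, card_eq_zero] at hij0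
  exact eq_empty_iff_forall_notMem.1 hij0 e (mem_filter.2 ⟨he, hi, hj⟩)

theorem trace_adjMatrix : (adjMatrix E).trace = 0 := by
  simp [Matrix.trace, adjMatrix]

theorem trace_adjMatrix_mul_self :
    (adjMatrix E * adjMatrix E).trace = ∑ e ∈ E, ∑ f ∈ E, (#(e ∩ f).offDiag : ℝ) := by
  have hsymm := adjMatrix_isHermitian E
  calc (adjMatrix E * adjMatrix E).trace
      = ∑ p : V × V, adjMatrix E p.1 p.2 * adjMatrix E p.1 p.2 := by
        simp only [Matrix.trace, Matrix.diag, Matrix.mul_apply, Fintype.sum_prod_type]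
        refine sum_congr rfl fun i _ => sum_congr rfl fun j _ => ?_
        rw [← hsymm.apply j i, star_trivial]
    _ = ∑ e ∈ E, ∑ f ∈ E, ∑ p : V × V,
          (if p ∈ e.offDiag then (1 : ℝ) else 0) * (if p ∈ f.offDiag then 1 else 0) := by
        simp only [adjMatrix_apply_eq_sum, sum_mul_sum]
        rw [sum_comm]
        exact sum_congr rfl fun e _ => sum_comm
    _ = ∑ e ∈ E, ∑ f ∈ E, (#(e ∩ f).offDiag : ℝ) := by
        simp only [boole_mul, ← ite_and, ← mem_inter, ← offDiag_inter, sum_ite_mem, univ_inter,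
          sum_const, nsmul_eq_mul, mul_one]

theorem card_offDiag_inter_le_of_ne {k : ℕ} {e f : Finset V} (he : #e = k) (hf : #f = k)
    (hef : e ≠ f) : #(e ∩ f).offDiag ≤ (k - 1) * (k - 2) := by
  have hlt : #(e ∩ f) < k := by
    refine he ▸ card_lt_card (inf_lt_left.2 fun hsub => hef ?_)
    exact eq_of_subset_of_card_le hsub (by rw [he, hf])
  rw [offDiag_card, ← Nat.mul_sub_one]
  exact Nat.mul_le_mul (by omega) (by omega)

theorem sum_card_offDiag_inter_le {k : ℕ} (hk : 2 ≤ k) (hunif : ∀ e ∈ E, #e = k) :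
    ∑ e ∈ E, ∑ f ∈ E, #(e ∩ f).offDiag ≤ (k - 1) * #E * (#E * (k - 2) + 2) := by
  have hrow : ∀ e ∈ E, ∑ f ∈ E, #(e ∩ f).offDiag ≤ (k - 1) * (#E * (k - 2) + 2) := by
    intro e he
    have hrest : ∑ f ∈ E.erase e, #(e ∩ f).offDiag ≤ (#E - 1) * ((k - 1) * (k - 2)) := by
      rw [← card_erase_of_mem he, ← smul_eq_mul]
      exact sum_le_card_nsmul _ _ _ fun f hf =>
        card_offDiag_inter_le_of_ne (hunif e he) (hunif f (mem_of_mem_erase hf))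
          (ne_of_mem_erase hf).symm
    have hdiag : #(e ∩ e).offDiag = k * (k - 1) := by
      rw [inter_self, offDiag_card, hunif e he, Nat.mul_sub_one]
    obtain ⟨j, rfl⟩ := Nat.exists_eq_add_of_le' hk
    obtain ⟨l, hl⟩ := Nat.exists_eq_add_of_le' (card_pos.2 ⟨e, he⟩)
    rw [← add_sum_erase _ _ he, hdiag]
    refine (Nat.add_le_add_left hrest _).trans_eq ?_
    simp only [hl, Nat.add_sub_cancel]
    ring
  calc ∑ e ∈ E, ∑ f ∈ E, #(e ∩ f).offDiag ≤ #E • ((k - 1) * (#E * (k - 2) + 2)) :=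
        sum_le_card_nsmul _ _ _ hrow
    _ = (k - 1) * #E * (#E * (k - 2) + 2) := by rw [smul_eq_mul]; ring

theorem sum_eigenvalues_adjMatrix : ∑ i, (adjMatrix_isHermitian E).eigenvalues i = 0 := by
  simpa [trace_adjMatrix] using ((adjMatrix_isHermitian E).trace_eq_sum_eigenvalues).symm

theorem sum_sq_eigenvalues_adjMatrix_le {k : ℕ} (hk : 2 ≤ k) (hunif : ∀ e ∈ E, #e = k) :
    ∑ i, (adjMatrix_isHermitian E).eigenvalues i ^ 2
      ≤ ((k : ℝ) - 1) * #E * (#E * ((k : ℝ) - 2) + 2) := by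
  have htrace := (adjMatrix_isHermitian E).trace_mul_self
  simp only [trace_adjMatrix_mul_self, RCLike.ofReal_real_eq_id, id] at htrace
  rw [← htrace]
  have hbound : ((∑ e ∈ E, ∑ f ∈ E, #(e ∩ f).offDiag : ℕ) : ℝ)
      ≤ (((k - 1) * #E * (#E * (k - 2) + 2) : ℕ) : ℝ) := by
    exact_mod_cast sum_card_offDiag_inter_le E hk hunif
  push_cast [Nat.cast_sub (by omega : 1 ≤ k), Nat.cast_sub hk] at hbound
  exact hbound

theorem exists_eigenvalue_adjMatrix_neg {e : Finset V} (he : e ∈ E) (h : 1 < #e) :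
    ∃ i, (adjMatrix_isHermitian E).eigenvalues i < 0 := by
  by_contra! hnonneg
  have hzero := (sum_eq_zero_iff_of_nonneg fun i _ => hnonneg i).1 (sum_eigenvalues_adjMatrix E)
  exact adjMatrix_ne_zero he h <| (adjMatrix_isHermitian E).eigenvalues_eq_zero_iff.1 <|
    funext fun i => hzero i (mem_univ i)

end Hypergraph

/-- For a `k`-uniform hypergraph `G` with `n` vertices, `m` edges and energy `E(G)`,
`EE(G) ≤ n + E(G) - 1 - √((k-1)m(m(k-2)+2)) + e^{√((k-1)m(m(k-2)+2))}`,
with equality iff `G` is edgeless. -/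
theorem stmt_7 (n k : ℕ) (hk : 2 ≤ k)
    (E : Finset (Finset (Fin n))) (hunif : ∀ e ∈ E, e.card = k) :
    estradaIndex E ≤ (n : ℝ) + energy E - 1 -
        Real.sqrt (((k : ℝ) - 1) * (E.card : ℝ) * ((E.card : ℝ) * ((k : ℝ) - 2) + 2)) +
        Real.exp (Real.sqrt (((k : ℝ) - 1) * (E.card : ℝ) * ((E.card : ℝ) * ((k : ℝ) - 2) + 2))) ∧
      (estradaIndex E = (n : ℝ) + energy E - 1 -
          Real.sqrt (((k : ℝ) - 1) * (E.card : ℝ) * ((E.card : ℝ) * ((k : ℝ) - 2) + 2)) +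
          Real.exp (Real.sqrt (((k : ℝ) - 1) * (E.card : ℝ) * ((E.card : ℝ) * ((k : ℝ) - 2) + 2)))
        ↔ E = ∅) := by
  rcases E.eq_empty_or_nonempty with rfl | ⟨e, he⟩
  · have hzero : (adjMatrix_isHermitian (∅ : Finset (Finset (Fin n)))).eigenvalues = 0 :=
      (adjMatrix_isHermitian _).eigenvalues_eq_zero_iff.2 adjMatrix_empty
    simp [estradaIndex, energy, hzero]
  · have hlt := sum_exp_lt_of_sum_sq_le (sum_sq_eigenvalues_adjMatrix_le E hk hunif)
      (exists_eigenvalue_adjMatrix_neg E he (by rw [hunif e he]; omega))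
    rw [Fintype.card_fin] at hlt
    exact ⟨hlt.le, iff_of_false hlt.ne (nonempty_iff_ne_empty.1 ⟨e, he⟩)⟩
end

section
/- Let G be a k-uniform hypergraph on n vertices (with 2 ≤ k ≤ n) that has at least one edge and is not the complete k-uniform hypergraph K_n^k. Then EE(K̄_n^k) < EE(G) < EE(K_n^k), where K̄_n^k is the edgeless hypergraph on n vertices and K_n^k is the complete k-uniform hypergraph on n vertices (whose edges are all k-element subsets of the vertex set). -/
open scoped BigOperators

set_option linter.unusedSectionVars false

/-!
Expanding `exp`, the Estrada index of a symmetric matrix `A` is `∑ₘ tr (Aᵐ) / m!`. For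
entrywise nonnegative matrices `A ≤ B` every `tr (Aᵐ)` is at most `tr (Bᵐ)`, and if `A` and `B`
are symmetric and differ off the diagonal then already `tr (A²) = ∑ A i j ^ 2` is strictly
smaller. Passing from `K̄ₙᵏ` to `G`, or from `G` to `Kₙᵏ`, adds edges and so increases the
adjacency matrix entrywise, strictly at any pair of vertices of an added edge.
-/

open Finset Nat

namespace Matrix

variable {n : Type*} [Fintype n] [DecidableEq n]

theorem IsHermitian.trace_pow {𝕜 : Type*} [RCLike 𝕜] {A : Matrix n n 𝕜} (hA : A.IsHermitian)
    (m : ℕ) : (A ^ m).trace = ∑ i, (hA.eigenvalues i : 𝕜) ^ m := by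
  conv_lhs => rw [hA.spectral_theorem, ← map_pow, Unitary.conjStarAlgAut_apply, trace_mul_cycle,
    Unitary.coe_star_mul_self, one_mul, diagonal_pow, trace_diagonal]
  simp

theorem IsHermitian.hasSum_trace_pow_div_factorial {A : Matrix n n ℝ} (hA : A.IsHermitian) :
    HasSum (fun m : ℕ => (A ^ m).trace / m !) (∑ i, Real.exp (hA.eigenvalues i)) := by
  simp only [hA.trace_pow, RCLike.ofReal_real_eq_id, id, Finset.sum_div, Real.exp_eq_exp_ℝ]
  exact hasSum_sum fun i _ => NormedSpace.expSeries_div_hasSum_exp _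

section Order

variable {α : Type*} [Semiring α] [PartialOrder α] {A B : Matrix n n α}

theorem pow_apply_le_pow_apply [IsOrderedRing α] (hA : ∀ i j, 0 ≤ A i j)
    (hAB : ∀ i j, A i j ≤ B i j) (k : ℕ) : ∀ i j, (A ^ k) i j ≤ (B ^ k) i j := by
  induction k with
  | zero => exact fun i j => le_rfl
  | succ k ih =>
    intro i j
    simp only [pow_succ, mul_apply]
    exact sum_le_sum fun l _ => mul_le_mul (ih i l) (hAB l j) (hA l j)
      ((pow_apply_nonneg hA k i l).trans (ih i l))

theorem trace_pow_le_trace_pow [IsOrderedRing α] (hA : ∀ i j, 0 ≤ A i j)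
    (hAB : ∀ i j, A i j ≤ B i j) (k : ℕ) : (A ^ k).trace ≤ (B ^ k).trace :=
  sum_le_sum fun i _ => pow_apply_le_pow_apply hA hAB k i i

theorem trace_sq_lt_trace_sq [IsStrictOrderedRing α] (hA : ∀ i j, 0 ≤ A i j)
    (hAB : ∀ i j, A i j ≤ B i j) {i j : n} (hij : A i j < B i j) (hji : A j i < B j i) :
    (A ^ 2).trace < (B ^ 2).trace := by
  have hle : ∀ i l, A i l * A l i ≤ B i l * B l i := fun i l =>
    mul_le_mul (hAB i l) (hAB l i) (hA l i) ((hA i l).trans (hAB i l))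
  simp only [trace, diag, sq, mul_apply]
  exact sum_lt_sum (fun i _ => sum_le_sum fun l _ => hle i l) ⟨i, mem_univ i,
    sum_lt_sum (fun l _ => hle i l) ⟨j, mem_univ j, mul_lt_mul'' hij hji (hA i j) (hA j i)⟩⟩

end Order

theorem IsHermitian.sum_exp_eigenvalues_lt {A B : Matrix n n ℝ} (hA : A.IsHermitian)
    (hB : B.IsHermitian) (hA₀ : ∀ i j, 0 ≤ A i j) (hAB : ∀ i j, A i j ≤ B i j) {i j : n}
    (hij : A i j < B i j) :
    ∑ i, Real.exp (hA.eigenvalues i) < ∑ i, Real.exp (hB.eigenvalues i) := by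
  have hji : A j i < B j i := by
    rwa [← hA.apply i j, ← hB.apply i j, star_trivial, star_trivial] at hij
  refine hasSum_lt (i := 2) (fun m => ?_) ?_ hA.hasSum_trace_pow_div_factorial
    hB.hasSum_trace_pow_div_factorial
  · gcongr
    exact trace_pow_le_trace_pow hA₀ hAB m
  · gcongr
    exact trace_sq_lt_trace_sq hA₀ hAB hij hji

end Matrix

section Hypergraph

variable {V : Type*} [Fintype V] [DecidableEq V]

theorem adjMatrix_nonneg (E : Finset (Finset V)) (i j : V) : 0 ≤ adjMatrix E i j := by
  unfold adjMatrix
  split <;> positivity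

theorem adjMatrix_mono {E₁ E₂ : Finset (Finset V)} (h : E₁ ⊆ E₂) (i j : V) :
    adjMatrix E₁ i j ≤ adjMatrix E₂ i j := by
  unfold adjMatrix
  split
  · exact le_rfl
  · exact_mod_cast card_le_card (filter_subset_filter _ h)

theorem adjMatrix_lt_of_mem_sdiff {E₁ E₂ : Finset (Finset V)} (h : E₁ ⊆ E₂) {e : Finset V}
    (he : e ∈ E₂ \ E₁) {i j : V} (hij : i ≠ j) (hi : i ∈ e) (hj : j ∈ e) :
    adjMatrix E₁ i j < adjMatrix E₂ i j := by
  obtain ⟨he₂, he₁⟩ := mem_sdiff.mp he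
  simp only [adjMatrix, if_neg hij]
  refine Nat.cast_lt.mpr (card_lt_card ⟨filter_subset_filter _ h, fun hsub => he₁ ?_⟩)
  exact (mem_filter.mp (hsub (mem_filter.mpr ⟨he₂, hi, hj⟩))).1

theorem estradaIndex_lt_of_ssubset {E₁ E₂ : Finset (Finset V)} (h : E₁ ⊂ E₂)
    (hcard : ∀ e ∈ E₂, 2 ≤ e.card) : estradaIndex E₁ < estradaIndex E₂ := by
  obtain ⟨e, he⟩ := sdiff_nonempty.mpr (not_subset.mpr (exists_of_ssubset h))
  obtain ⟨i, hi, j, hj, hij⟩ := one_lt_card.mp (hcard e (mem_sdiff.mp he).1)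
  exact (adjMatrix_isHermitian E₁).sum_exp_eigenvalues_lt (adjMatrix_isHermitian E₂)
    (adjMatrix_nonneg E₁) (adjMatrix_mono h.subset)
    (adjMatrix_lt_of_mem_sdiff h.subset he hij hi hj)

end Hypergraph

theorem stmt_11_general (n k : ℕ) (hk2 : 2 ≤ k)
    (E : Finset (Finset (Fin n))) (hunif : ∀ e ∈ E, e.card = k)
    (hne : E.Nonempty)
    (hncomp : E ≠ Finset.powersetCard k (Finset.univ : Finset (Fin n))) :
    estradaIndex (∅ : Finset (Finset (Fin n))) < estradaIndex E ∧
      estradaIndex E <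
        estradaIndex (Finset.powersetCard k (Finset.univ : Finset (Fin n))) := by
  have hsub : E ⊆ powersetCard k univ := fun e he =>
    mem_powersetCard.mpr ⟨subset_univ e, hunif e he⟩
  exact ⟨estradaIndex_lt_of_ssubset (empty_ssubset.mpr hne)
      fun e he => hk2.trans_eq (hunif e he).symm,
    estradaIndex_lt_of_ssubset (hsub.ssubset_of_ne hncomp)
      fun e he => hk2.trans_eq (mem_powersetCard.mp he).2.symm⟩

/-- For a `k`-uniform hypergraph `G` on `n` vertices with at least one edge and not
complete, `EE(K̄ₙᵏ) < EE(G) < EE(Kₙᵏ)`, where `K̄ₙᵏ` is the edgeless hypergraph and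
`Kₙᵏ` the complete `k`-uniform hypergraph. -/
theorem stmt_11 (n k : ℕ) (hk2 : 2 ≤ k) (hkn : k ≤ n)
    (E : Finset (Finset (Fin n))) (hunif : ∀ e ∈ E, e.card = k)
    (hne : E.Nonempty)
    (hncomp : E ≠ Finset.powersetCard k (Finset.univ : Finset (Fin n))) :
    estradaIndex (∅ : Finset (Finset (Fin n))) < estradaIndex E ∧
      estradaIndex E <
        estradaIndex (Finset.powersetCard k (Finset.univ : Finset (Fin n))) :=
  stmt_11_general n k hk2 E hunif hne hncomp
end
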